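/- (Fine's normal form theorem.) Let P be a finite set of propositional variables and d ≥ 0. For every modal formula φ ∈ L(P) with md(φ) ≤ d that is satisfiable for K, there exists a set S ⊆ F_P^d such that φ ↔ ⋁_{ψ∈S} ψ is valid for K. -/

import Mathlib

/-- Modal formulas in negation normal form, as in the paper:
φ ::= ⊥ | ⊤ | p | ¬p | φ∧φ | φ∨φ | □φ | ◇φ. -/
inductive Form : Type where
  | bot : Form
  | top : Form
  | pos : ℕ → Form
  | npos : ℕ → Form
  | and : Form → Form → Form
  | or : Form → Form → Form
  | box : Form → Form
  | dia : Form → Form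
deriving DecidableEq

namespace Form

/-- Negation, defined as usual (by De Morgan dualities). -/
def neg : Form → Form
  | bot => top
  | top => bot
  | pos p => npos p
  | npos p => pos p
  | and φ ψ => or φ.neg ψ.neg
  | or φ ψ => and φ.neg ψ.neg
  | box φ => dia φ.neg
  | dia φ => box φ.neg

/-- Implication φ → ψ, defined as usual. -/
def imp (φ ψ : Form) : Form := or φ.neg ψ

/-- Bi-implication φ ↔ ψ, defined as usual. -/
def biimp (φ ψ : Form) : Form := and (imp φ ψ) (imp ψ φ)

/-- P(φ): the set of propositional variables occurring in φ. -/
def vars : Form → Finset ℕ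
  | bot => ∅
  | top => ∅
  | pos p => {p}
  | npos p => {p}
  | and φ ψ => φ.vars ∪ ψ.vars
  | or φ ψ => φ.vars ∪ ψ.vars
  | box φ => φ.vars
  | dia φ => φ.vars

/-- Modal depth. -/
def md : Form → ℕ
  | bot => 0
  | top => 0
  | pos _ => 0
  | npos _ => 0
  | and φ ψ => max φ.md ψ.md
  | or φ ψ => max φ.md ψ.md
  | box φ => φ.md + 1
  | dia φ => φ.md + 1

/-- sub(φ): the set of subformulas of φ. -/
def subf : Form → Finset Form
  | bot => {bot}
  | top => {top}
  | pos p => {pos p}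
  | npos p => {npos p}
  | and φ ψ => insert (and φ ψ) (φ.subf ∪ ψ.subf)
  | or φ ψ => insert (or φ ψ) (φ.subf ∪ ψ.subf)
  | box φ => insert (box φ) φ.subf
  | dia φ => insert (dia φ) φ.subf

/-- s̄ub(φ) = sub(φ) ∪ {¬ψ : ψ ∈ sub(φ)}. -/
def subBar (φ : Form) : Finset Form := φ.subf ∪ φ.subf.image neg

/-- □^k φ : k nested boxes. -/
def boxIter : ℕ → Form → Form
  | 0, φ => φ
  | n + 1, φ => box (boxIter n φ)

def isDia : Form → Bool
  | dia _ => true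
  | _ => false

def isBox : Form → Bool
  | box _ => true
  | _ => false

end Form

/-- Big conjunction over a finite set of formulas (⋀∅ = ⊤). -/
noncomputable def bigAnd (s : Finset Form) : Form := s.toList.foldr Form.and Form.top

/-- Big disjunction over a finite set of formulas (⋁∅ = ⊥). -/
noncomputable def bigOr (s : Finset Form) : Form := s.toList.foldr Form.or Form.bot

/-- th(a) = ⋀ a. -/
noncomputable def th (a : Finset Form) : Form := bigAnd a

/-- A finite Kripke model: a nonempty finite set of states, an accessibility
relation and a valuation. -/
structure Model : Type 1 where
  W : Type
  nonempty : Nonempty W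
  finite : Finite W
  R : W → W → Prop
  V : W → Set ℕ

/-- Satisfaction M,w ⊨ φ. -/
def Model.sat (M : Model) : M.W → Form → Prop
  | _, .bot => False
  | _, .top => True
  | w, .pos p => p ∈ M.V w
  | w, .npos p => p ∉ M.V w
  | w, .and φ ψ => M.sat w φ ∧ M.sat w ψ
  | w, .or φ ψ => M.sat w φ ∨ M.sat w ψ
  | w, .box φ => ∀ v, M.R w v → M.sat v φ
  | w, .dia φ => ∃ v, M.R w v ∧ M.sat v φ

/-- The six base logics K, D, T, K4, KD4, S4. -/
inductive BaseLogic : Type where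
  | K | D | T | K4 | KD4 | S4
deriving DecidableEq

/-- A logic: a base logic, possibly extended by axiom 5. -/
structure Logic : Type where
  base : BaseLogic
  has5 : Bool
deriving DecidableEq

def Logic.K : Logic := ⟨.K, false⟩
def Logic.D : Logic := ⟨.D, false⟩
def Logic.T : Logic := ⟨.T, false⟩
def Logic.K4 : Logic := ⟨.K4, false⟩
def Logic.KD4 : Logic := ⟨.KD4, false⟩
def Logic.S4 : Logic := ⟨.S4, false⟩

/-- l + 5. -/
def BaseLogic.plus5 (b : BaseLogic) : Logic := ⟨b, true⟩

/-- M is a model for the logic l (frame conditions). -/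
def Model.IsFor (M : Model) (l : Logic) : Prop :=
  (match l.base with
    | .K => True
    | .D => ∀ w, ∃ v, M.R w v
    | .T => ∀ w, M.R w w
    | .K4 => ∀ a b c, M.R a b → M.R b c → M.R a c
    | .KD4 => (∀ w, ∃ v, M.R w v) ∧ (∀ a b c, M.R a b → M.R b c → M.R a c)
    | .S4 => (∀ w, M.R w w) ∧ (∀ a b c, M.R a b → M.R b c → M.R a c))
  ∧ (l.has5 = true → ∀ a b c, M.R a b → M.R a c → M.R b c)

/-- φ is satisfiable for l: satisfied at some state of some finite model for l. -/
def Satisfiable (l : Logic) (φ : Form) : Prop :=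
  ∃ M : Model, M.IsFor l ∧ ∃ w : M.W, M.sat w φ

/-- φ is valid for l: satisfied at every state of every finite model for l. -/
def Valid (l : Logic) (φ : Form) : Prop :=
  ∀ M : Model, M.IsFor l → ∀ w : M.W, M.sat w φ

/-- φ is complete for l: for every ψ ∈ L(P(φ)), φ→ψ or φ→¬ψ is valid for l. -/
def Complete (l : Logic) (φ : Form) : Prop :=
  ∀ ψ : Form, ψ.vars ⊆ φ.vars → (Valid l (φ.imp ψ) ∨ Valid l (φ.imp ψ.neg))

/-- Z is a bisimulation modulo P from M to M'. -/
def IsBisim (P : Set ℕ) (M M' : Model) (Z : M.W → M'.W → Prop) : Prop :=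
  (∃ s s', Z s s') ∧
  ∀ s s', Z s s' →
    (M.V s ∩ P = M'.V s' ∩ P) ∧
    (∀ t, M.R s t → ∃ t', M'.R s' t' ∧ Z t t') ∧
    (∀ t', M'.R s' t' → ∃ t, M.R s t ∧ Z t t')

/-- (M,a) ∼_P (M',a'). -/
def Bisimilar (P : Set ℕ) (M : Model) (a : M.W) (M' : Model) (a' : M'.W) : Prop :=
  ∃ Z, IsBisim P M M' Z ∧ Z a a'

/-- (M,a) ≡_P (M',a'): the two pointed models satisfy the same formulas of L(P). -/
def EquivP (P : Set ℕ) (M : Model) (a : M.W) (M' : Model) (a' : M'.W) : Prop :=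
  ∀ φ : Form, ↑φ.vars ⊆ P → (M.sat a φ ↔ M'.sat a' φ)

/-- (M,s) is flat (for base logic l, with axiom 5): the carrier is {s}∪W and
R = R1 ∪ R2 with R1 ⊆ {s}×W, R2 an equivalence relation on W, and s ∈ W if
l ∈ {T,S4}. -/
def Flat (l : BaseLogic) (M : Model) (s : M.W) : Prop :=
  ∃ W : Set M.W, (∀ w, w = s ∨ w ∈ W) ∧
    ∃ R1 R2 : M.W → M.W → Prop,
      (∀ x y, M.R x y ↔ (R1 x y ∨ R2 x y)) ∧
      (∀ x y, R1 x y → x = s ∧ y ∈ W) ∧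
      (∀ x y, R2 x y → x ∈ W ∧ y ∈ W) ∧
      (∀ x ∈ W, R2 x x) ∧
      (∀ x y, R2 x y → R2 y x) ∧
      (∀ x y z, R2 x y → R2 y z → R2 x z) ∧
      ((l = .T ∨ l = .S4) → s ∈ W)

/-- A maximal state for l with respect to φ: a maximally l-consistent subset
of s̄ub(φ). -/
def MaxState (l : Logic) (φ : Form) (a : Finset Form) : Prop :=
  a ⊆ φ.subBar ∧ Satisfiable l (th a) ∧ ∀ ψ ∈ φ.subf, ψ ∈ a ∨ ψ.neg ∈ a

/-- D(x) = {◇ψ : ◇ψ ∈ x}. -/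
def DSet (x : Finset Form) : Finset Form := x.filter (fun ψ => ψ.isDia = true)

/-- B(x) = {□ψ : □ψ ∈ x}. -/
def BSet (x : Finset Form) : Finset Form := x.filter (fun ψ => ψ.isBox = true)

/-- A view: a parent-state and a finite set of children-states. -/
structure View : Type where
  parent : Finset Form
  children : Finset (Finset Form)

/-- The view is with respect to φ: all its states are subsets of s̄ub(φ). -/
def View.WF (φ : Form) (S : View) : Prop :=
  S.parent ⊆ φ.subBar ∧ ∀ c ∈ S.children, c ⊆ φ.subBar

/-- A set of formulas is l-closed. -/
def LClosed (l : Logic) (P : Finset ℕ) (s : Finset Form) : Prop :=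
  (∀ φ1 φ2 : Form, Form.and φ1 φ2 ∈ s → φ1 ∈ s ∧ φ2 ∈ s) ∧
  (∀ φ1 φ2 : Form, Form.or φ1 φ2 ∈ s → φ1 ∈ s ∨ φ2 ∈ s) ∧
  ((l.base = .T ∨ l.base = .S4) → ∀ ψ : Form, Form.box ψ ∈ s → ψ ∈ s) ∧
  (∀ p ∈ P, Form.pos p ∈ s ∨ Form.npos p ∈ s)

/-- The view S is l-complete. -/
def ViewLComplete (l : Logic) (P : Finset ℕ) (S : View) : Prop :=
  LClosed l P S.parent ∧
  (∀ c ∈ S.children, LClosed l P c) ∧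
  (∀ ψ : Form, Form.dia ψ ∈ S.parent → ∃ c ∈ S.children, ψ ∈ c) ∧
  (∀ ψ : Form, Form.box ψ ∈ S.parent → ∀ c ∈ S.children, ψ ∈ c) ∧
  ((l.base = .K4 ∨ l.base = .KD4 ∨ l.base = .S4) →
    ∀ ψ : Form, Form.box ψ ∈ S.parent → ∀ c ∈ S.children, Form.box ψ ∈ c) ∧
  (l.base = .KD4 → S.children.Nonempty)

/-- The view S is consistent for l: every one of its states is consistent. -/
def ViewConsistent (l : Logic) (S : View) : Prop :=
  Satisfiable l (th S.parent) ∧ ∀ c ∈ S.children, Satisfiable l (th c)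

/-- d = max{md(th(c')) : c' ∈ C(S)}. -/
noncomputable def childDepth (S : View) : ℕ := S.children.sup (fun c => (th c).md)

/-- A K-maximal child-state: a maximally K-consistent subset of s̄ub_d(φ). -/
def KMaxChild (φ : Form) (d : ℕ) (c : Finset Form) : Prop :=
  c ⊆ φ.subBar.filter (fun ψ => ψ.md ≤ d) ∧
  Satisfiable Logic.K (th c) ∧
  ∀ ψ ∈ φ.subf, ψ.md ≤ d → (ψ ∈ c ∨ ψ.neg ∈ c)

/-- S' completes S (for logic l, with respect to φ). -/
def ViewCompletes (l : Logic) (φ : Form) (S' S : View) : Prop :=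
  ViewLComplete l φ.vars S' ∧
  S.parent ⊆ S'.parent ∧
  (∀ a ∈ S.children, ∃ a' ∈ S'.children, a ⊆ a') ∧
  (l.base = .K → ∀ a' ∈ S'.children, KMaxChild φ (childDepth S') a') ∧
  (l.base ≠ .K → ∀ a' ∈ S'.children, MaxState l φ a')

/-- The depth-0 normal form ⋀_{p∈S} p ∧ ⋀_{p∈P∖S} ¬p. -/
noncomputable def nf0 (P S : Finset ℕ) : Form :=
  Form.and (bigAnd (S.image Form.pos)) (bigAnd ((P \ S).image Form.npos))

/-- Fine's normal forms F_P^d. -/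
noncomputable def NF (P : Finset ℕ) : ℕ → Set Form
  | 0 => { χ | ∃ S ⊆ P, χ = nf0 P S }
  | d + 1 => { χ | ∃ S : Finset Form, ↑S ⊆ NF P d ∧ ∃ S0 ⊆ P,
      χ = Form.and (nf0 P S0)
            (Form.and (bigAnd (S.image Form.dia)) (Form.box (bigOr S))) }

/-- φ is complete up to its depth for l. -/
def CompleteUpToDepth (l : Logic) (φ : Form) : Prop :=
  ∀ ψ : Form, ψ.vars ⊆ φ.vars → ψ.md ≤ φ.md →
    (Valid l (φ.imp ψ) ∨ Valid l (φ.imp ψ.neg))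


/-!
Over a finite P, every state w of a model satisfies some normal form of depth d: its atoms
over P, together with ◇χ and □⋁χ for normal forms χ of depth d - 1 realised at its successors.
Two states satisfying the same normal form of depth d satisfy the same formulas of L(P) of depth
at most d, by a back-and-forth induction on d. Hence φ is equivalent to the disjunction of those
normal forms of depth d that are jointly satisfiable with φ, and there are only finitely many.
-/

namespace Model

variable {M M' : Model}

lemma isFor_K (M : Model) : M.IsFor Logic.K := ⟨trivial, by simp [Logic.K]⟩

@[simp] lemma sat_bigAnd {w : M.W} (s : Finset Form) :
    M.sat w (bigAnd s) ↔ ∀ ψ ∈ s, M.sat w ψ := by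
  suffices ∀ l : List Form, M.sat w (l.foldr Form.and Form.top) ↔ ∀ ψ ∈ l, M.sat w ψ by
    simpa [bigAnd] using this s.toList
  intro l
  induction l <;> simp_all [Model.sat]

@[simp] lemma sat_bigOr {w : M.W} (s : Finset Form) :
    M.sat w (bigOr s) ↔ ∃ ψ ∈ s, M.sat w ψ := by
  suffices ∀ l : List Form, M.sat w (l.foldr Form.or Form.bot) ↔ ∃ ψ ∈ l, M.sat w ψ by
    simpa [bigOr] using this s.toList
  intro l
  induction l <;> simp_all [Model.sat]

lemma sat_neg {w : M.W} (φ : Form) : M.sat w φ.neg ↔ ¬ M.sat w φ := by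
  induction φ generalizing w <;> simp_all [Form.neg, Model.sat, imp_iff_not_or]

lemma sat_biimp {w : M.W} (φ ψ : Form) :
    M.sat w (φ.biimp ψ) ↔ (M.sat w φ ↔ M.sat w ψ) := by
  simp only [Form.biimp, Form.imp, Model.sat, sat_neg]
  tauto

lemma sat_nf0 {w : M.W} {P S : Finset ℕ} (hS : S ⊆ P) :
    M.sat w (nf0 P S) ↔ ∀ p ∈ P, (p ∈ M.V w ↔ p ∈ S) := by
  simp only [nf0, Model.sat, sat_bigAnd, Finset.forall_mem_image, Finset.mem_sdiff]
  constructor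
  · rintro ⟨hpos, hneg⟩ p hp
    exact ⟨fun h => by_contra fun hpS => hneg ⟨hp, hpS⟩ h, fun hpS => hpos hpS⟩
  · intro h
    exact ⟨fun p hp => (h p (hS hp)).2 hp, fun p ⟨hp, hpS⟩ hV => hpS ((h p hp).1 hV)⟩

lemma atoms_iff_of_sat_nf0 {w : M.W} {w' : M'.W} {P S : Finset ℕ} (hS : S ⊆ P)
    (h : M.sat w (nf0 P S)) (h' : M'.sat w' (nf0 P S)) :
    ∀ p ∈ P, (p ∈ M.V w ↔ p ∈ M'.V w') := fun p hp =>
  ((sat_nf0 hS).1 h p hp).trans ((sat_nf0 hS).1 h' p hp).symm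

def EquivUpTo (P : Finset ℕ) (d : ℕ) (M : Model) (w : M.W) (M' : Model) (w' : M'.W) : Prop :=
  ∀ ψ : Form, ψ.vars ⊆ P → ψ.md ≤ d → (M.sat w ψ ↔ M'.sat w' ψ)

lemma equivUpTo_of_atoms_of_modal {P : Finset ℕ} {d : ℕ} {w : M.W} {w' : M'.W}
    (hA : ∀ p ∈ P, (p ∈ M.V w ↔ p ∈ M'.V w'))
    (hbox : ∀ ψ : Form, ψ.vars ⊆ P → ψ.md < d → (M.sat w ψ.box ↔ M'.sat w' ψ.box))
    (hdia : ∀ ψ : Form, ψ.vars ⊆ P → ψ.md < d → (M.sat w ψ.dia ↔ M'.sat w' ψ.dia)) :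
    EquivUpTo P d M w M' w' := by
  intro ψ hv hd
  induction ψ with
  | bot | top => simp [Model.sat]
  | pos p | npos p => simp [Model.sat, hA p (hv (by simp [Form.vars]))]
  | and a b iha ihb | or a b iha ihb =>
    simp only [Form.vars, Finset.union_subset_iff] at hv
    simp only [Form.md, max_le_iff] at hd
    simp only [Model.sat, iha hv.1 hd.1, ihb hv.2 hd.2]
  | box a => exact hbox a hv hd
  | dia a => exact hdia a hv hd

lemma equivUpTo_succ {P : Finset ℕ} {d : ℕ} {w : M.W} {w' : M'.W}
    (hA : ∀ p ∈ P, (p ∈ M.V w ↔ p ∈ M'.V w'))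
    (hforth : ∀ t, M.R w t → ∃ t', M'.R w' t' ∧ EquivUpTo P d M t M' t')
    (hback : ∀ t', M'.R w' t' → ∃ t, M.R w t ∧ EquivUpTo P d M t M' t') :
    EquivUpTo P (d + 1) M w M' w' := by
  refine equivUpTo_of_atoms_of_modal hA (fun ψ hv hd => ?_) (fun ψ hv hd => ?_)
  all_goals
    have hψ : ψ.md ≤ d := Nat.lt_succ_iff.1 hd
    simp only [Model.sat]
    constructor
  · intro h t' ht'
    obtain ⟨t, ht, he⟩ := hback t' ht'
    exact (he ψ hv hψ).1 (h t ht)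
  · intro h t ht
    obtain ⟨t', ht', he⟩ := hforth t ht
    exact (he ψ hv hψ).2 (h t' ht')
  · rintro ⟨t, ht, htψ⟩
    obtain ⟨t', ht', he⟩ := hforth t ht
    exact ⟨t', ht', (he ψ hv hψ).1 htψ⟩
  · rintro ⟨t', ht', ht'ψ⟩
    obtain ⟨t, ht, he⟩ := hback t' ht'
    exact ⟨t, ht, (he ψ hv hψ).2 ht'ψ⟩

lemma equivUpTo_of_sat_NF {P : Finset ℕ} {d : ℕ} {χ : Form} (hχ : χ ∈ NF P d)
    {w : M.W} {w' : M'.W} (hw : M.sat w χ) (hw' : M'.sat w' χ) :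
    EquivUpTo P d M w M' w' := by
  induction d generalizing χ w w' with
  | zero =>
    obtain ⟨S, hS, rfl⟩ := hχ
    exact equivUpTo_of_atoms_of_modal (atoms_iff_of_sat_nf0 hS hw hw')
      (fun _ _ hd => absurd hd (Nat.not_lt_zero _)) (fun _ _ hd => absurd hd (Nat.not_lt_zero _))
  | succ d ih =>
    obtain ⟨S, hSNF, S0, hS0, rfl⟩ := hχ
    simp only [Model.sat, sat_bigAnd, Finset.forall_mem_image, sat_bigOr] at hw hw'
    obtain ⟨h0, hD, hB⟩ := hw
    obtain ⟨h0', hD', hB'⟩ := hw'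
    refine equivUpTo_succ (atoms_iff_of_sat_nf0 hS0 h0 h0') (fun t ht => ?_) (fun t' ht' => ?_)
    · obtain ⟨χ, hχ, htχ⟩ := hB t ht
      obtain ⟨t', ht', ht'χ⟩ := hD' hχ
      exact ⟨t', ht', ih (hSNF hχ) htχ ht'χ⟩
    · obtain ⟨χ, hχ, ht'χ⟩ := hB' t' ht'
      obtain ⟨t, ht, htχ⟩ := hD hχ
      exact ⟨t, ht, ih (hSNF hχ) htχ ht'χ⟩

lemma exists_mem_NF_sat (P : Finset ℕ) (M : Model) (d : ℕ) (w : M.W) :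
    ∃ χ ∈ NF P d, M.sat w χ := by
  classical
  have atoms : ∀ w : M.W, ∃ S ⊆ P, M.sat w (nf0 P S) := fun w =>
    ⟨P.filter (· ∈ M.V w), Finset.filter_subset _ _,
      (sat_nf0 (Finset.filter_subset _ _)).2 fun p hp => by simp [hp]⟩
  induction d generalizing w with
  | zero =>
    obtain ⟨S, hS, h⟩ := atoms w
    exact ⟨_, ⟨S, hS, rfl⟩, h⟩
  | succ d ih =>
    choose χ hχNF hχsat using ih
    have := M.finite
    obtain ⟨S0, hS0, h0⟩ := atoms w
    let succs := (Set.toFinite {v | M.R w v}).toFinset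
    refine ⟨_, ⟨succs.image χ, ?_, S0, hS0, rfl⟩, ?_⟩
    · simpa [Set.subset_def] using fun v _ => hχNF v
    · simp only [Model.sat, sat_bigAnd, sat_bigOr, Finset.forall_mem_image, Finset.exists_mem_image]
      exact ⟨h0, fun v hv => ⟨v, by simpa [succs] using hv, hχsat v⟩,
        fun v hv => ⟨v, by simpa [succs] using hv, hχsat v⟩⟩

end Model

lemma NF_finite (P : Finset ℕ) (d : ℕ) : (NF P d).Finite := by
  induction d with
  | zero =>
    refine (P.powerset.finite_toSet.image (nf0 P)).subset ?_
    rintro χ ⟨S, hS, rfl⟩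
    exact ⟨S, by simpa using hS, rfl⟩
  | succ d ih =>
    refine ((ih.toFinset.powerset.finite_toSet.prod P.powerset.finite_toSet).image
      fun SS : Finset Form × Finset ℕ => Form.and (nf0 P SS.2)
        (Form.and (bigAnd (SS.1.image Form.dia)) (Form.box (bigOr SS.1)))).subset ?_
    rintro χ ⟨S, hS, S0, hS0, rfl⟩
    exact ⟨(S, S0), ⟨by simpa [Set.subset_def] using hS, by simpa using hS0⟩, rfl⟩

theorem stmt15_general (P : Finset ℕ) (d : ℕ) (φ : Form)
    (hv : φ.vars ⊆ P) (hd : φ.md ≤ d) :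
    ∃ S : Finset Form, ↑S ⊆ NF P d ∧ Valid Logic.K (φ.biimp (bigOr S)) := by
  have hT : {χ ∈ NF P d | Satisfiable Logic.K (χ.and φ)}.Finite :=
    (NF_finite P d).subset (Set.sep_subset _ _)
  refine ⟨hT.toFinset, fun χ hχ => (hT.mem_toFinset.1 hχ).1, fun M _ w => ?_⟩
  rw [Model.sat_biimp, Model.sat_bigOr]
  constructor
  · intro hφ
    obtain ⟨χ, hχ, hwχ⟩ := Model.exists_mem_NF_sat P M d w
    exact ⟨χ, hT.mem_toFinset.2 ⟨hχ, M, M.isFor_K, w, hwχ, hφ⟩, hwχ⟩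
  · rintro ⟨χ, hχ, hwχ⟩
    obtain ⟨hχNF, M', -, w', hw'χ, hw'φ⟩ := hT.mem_toFinset.1 hχ
    exact (Model.equivUpTo_of_sat_NF hχNF hw'χ hwχ φ hv hd).1 hw'φ

/-- Fine's normal form theorem for K. -/
theorem stmt15 (P : Finset ℕ) (d : ℕ) (φ : Form)
    (hv : φ.vars ⊆ P) (hd : φ.md ≤ d) (hsat : Satisfiable Logic.K φ) :
    ∃ S : Finset Form, ↑S ⊆ NF P d ∧ Valid Logic.K (φ.biimp (bigOr S)) :=
  stmt15_general P d φ hv hd
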